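/- If A is a nonempty nearly convex subset of a Euclidean space, then the relative interior (intrinsic interior) of A is nonempty and convex. -/

import Mathlib

variable {X : Type*} [NormedAddCommGroup X] [InnerProductSpace ℝ X] [FiniteDimensional ℝ X]

def NearlyEqual (A B : Set X) : Prop :=
  closure A = closure B ∧ intrinsicInterior ℝ A = intrinsicInterior ℝ B

def NearlyConvex (A : Set X) : Prop :=
  ∃ C : Set X, Convex ℝ C ∧ C ⊆ A ∧ A ⊆ closure C

/-!
If `C ⊆ A ⊆ closure C` with `C` convex, then `A` and `C` span the same (closed) affine subspace.
Identifying it isometrically with a vector space makes both sets full-dimensional, and there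
`interior C ⊆ interior A ⊆ interior (closure C) = interior C`. So `A` has the relative interior
of `C`, which is nonempty and convex because `C` is.
-/

open Set

theorem intrinsicInterior_eq_interior_of_affineSpan_eq_top {𝕜 V P : Type*} [Ring 𝕜]
    [AddCommGroup V] [Module 𝕜 V] [TopologicalSpace P] [AddTorsor V P] {s : Set P}
    (h : affineSpan 𝕜 s = ⊤) : intrinsicInterior 𝕜 s = interior s := by
  refine subset_antisymm ?_ interior_subset_intrinsicInterior
  have hopen : IsOpen (affineSpan 𝕜 s : Set P) := by
    rw [h]
    exact isOpen_univ
  rintro _ ⟨x, hx, rfl⟩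
  refine interior_mono ?_ (hopen.isOpenMap_subtype_val.image_interior_subset _ ⟨x, hx, rfl⟩)
  exact image_preimage_subset _ _

section AffineSpanParametrization

variable {𝕜 V E : Type*} [NormedField 𝕜] [NormedAddCommGroup V] [NormedSpace 𝕜 V]
  [NormedAddCommGroup E] [NormedSpace 𝕜 E]

theorem AffineSubspace.exists_affineIsometry_range_eq (S : AffineSubspace 𝕜 E) [Nonempty S] :
    ∃ φ : S.direction →ᵃⁱ[𝕜] E, range φ = S := by
  obtain ⟨p⟩ := ‹Nonempty S›
  refine ⟨S.subtypeₐᵢ.comp (AffineIsometryEquiv.constVSub 𝕜 p).symm.toAffineIsometry, ?_⟩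
  change range (Subtype.val ∘ (AffineIsometryEquiv.constVSub 𝕜 p).symm) = S
  rw [range_comp, (AffineIsometryEquiv.constVSub 𝕜 p).symm.surjective.range_eq, image_univ,
    Subtype.range_coe]

namespace AffineIsometry

variable (φ : V →ᵃⁱ[𝕜] E) {s : Set E}

theorem affineSpan_preimage_eq_top (h : range φ = affineSpan 𝕜 s) :
    affineSpan 𝕜 (φ ⁻¹' s) = ⊤ := by
  have hs : φ '' (φ ⁻¹' s) = s := image_preimage_eq_of_subset (h ▸ subset_affineSpan 𝕜 s)
  rw [← AffineSubspace.comap_map_eq_of_injective φ.injective (affineSpan 𝕜 (φ ⁻¹' s)),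
    AffineSubspace.map_span, coe_toAffineMap, hs, eq_top_iff]
  intro x _
  rw [AffineSubspace.mem_comap, coe_toAffineMap, ← SetLike.mem_coe, ← h]
  exact mem_range_self x

theorem intrinsicInterior_eq_image_interior_preimage (h : range φ = affineSpan 𝕜 s) :
    intrinsicInterior 𝕜 s = φ '' interior (φ ⁻¹' s) := by
  have hs : φ '' (φ ⁻¹' s) = s := image_preimage_eq_of_subset (h ▸ subset_affineSpan 𝕜 s)
  conv_lhs => rw [← hs]
  rw [φ.intrinsicInterior_image,
    intrinsicInterior_eq_interior_of_affineSpan_eq_top (φ.affineSpan_preimage_eq_top h)]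

end AffineIsometry

end AffineSpanParametrization

section Convex

variable {E : Type*} [NormedAddCommGroup E] [NormedSpace ℝ E]

protected theorem Convex.intrinsicInterior {s : Set E} (hs : Convex ℝ s) :
    Convex ℝ (intrinsicInterior ℝ s) := by
  rcases s.eq_empty_or_nonempty with rfl | hne
  · rw [intrinsicInterior_empty]
    exact convex_empty
  have := ((affineSpan_nonempty ℝ).2 hne).to_subtype
  obtain ⟨φ, hφ⟩ := (affineSpan ℝ s).exists_affineIsometry_range_eq
  rw [φ.intrinsicInterior_eq_image_interior_preimage hφ]
  exact ((hs.affine_preimage φ.toAffineMap).interior).affine_image φ.toAffineMap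

theorem Convex.interior_eq_of_subset_closure {C A : Set E} (hC : Convex ℝ C)
    (hint : (interior C).Nonempty) (hCA : C ⊆ A) (hAC : A ⊆ closure C) :
    interior A = interior C :=
  subset_antisymm
    ((interior_mono hAC).trans (hC.interior_closure_eq_interior_of_nonempty_interior hint).le)
    (interior_mono hCA)

variable [FiniteDimensional ℝ E]

theorem affineSpan_eq_of_subset_closure {C A : Set E} (hCA : C ⊆ A) (hAC : A ⊆ closure C) :
    affineSpan ℝ A = affineSpan ℝ C := by
  refine le_antisymm (affineSpan_le.2 ?_) (affineSpan_mono ℝ hCA)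
  exact hAC.trans (closure_minimal (subset_affineSpan ℝ C)
    (affineSpan ℝ C).closed_of_finiteDimensional)

theorem Convex.intrinsicInterior_eq_of_subset_closure {C A : Set E} (hC : Convex ℝ C)
    (hCA : C ⊆ A) (hAC : A ⊆ closure C) : intrinsicInterior ℝ A = intrinsicInterior ℝ C := by
  rcases C.eq_empty_or_nonempty with rfl | hne
  · rw [closure_empty, subset_empty_iff] at hAC
    rw [hAC]
  have := ((affineSpan_nonempty ℝ).2 hne).to_subtype
  obtain ⟨φ, hφ⟩ := (affineSpan ℝ C).exists_affineIsometry_range_eq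
  have hφA : range φ = affineSpan ℝ A := by rw [hφ, affineSpan_eq_of_subset_closure hCA hAC]
  have hpre : φ ⁻¹' A ⊆ closure (φ ⁻¹' C) := by
    rw [φ.isometry.isEmbedding.closure_eq_preimage_closure_image,
      image_preimage_eq_of_subset (hφ ▸ subset_affineSpan ℝ C)]
    exact preimage_mono hAC
  have hconv : Convex ℝ (φ ⁻¹' C) := hC.affine_preimage φ.toAffineMap
  rw [φ.intrinsicInterior_eq_image_interior_preimage hφ,
    φ.intrinsicInterior_eq_image_interior_preimage hφA,
    hconv.interior_eq_of_subset_closure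
      (hconv.interior_nonempty_iff_affineSpan_eq_top.2 (φ.affineSpan_preimage_eq_top hφ))
      (preimage_mono hCA) hpre]

end Convex

theorem relint_nonempty_convex_of_nearlyConvex (A : Set X) (h : NearlyConvex A)
    (hne : A.Nonempty) :
    (intrinsicInterior ℝ A).Nonempty ∧ Convex ℝ (intrinsicInterior ℝ A) := by
  obtain ⟨C, hC, hCA, hAC⟩ := h
  have hCne : C.Nonempty := closure_nonempty_iff.1 (hne.mono hAC)
  rw [hC.intrinsicInterior_eq_of_subset_closure hCA hAC]
  exact ⟨hCne.intrinsicInterior hC, hC.intrinsicInterior⟩
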